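/- Assume |α_v| ≤ Q/2 for every vertex v (local minimality). Then 2·t_1 + 2·t_2 ≥ (q+1−√q)·|α| + (ε/2)·(q+1−√q)·r. -/

import Mathlib

open scoped Classical
open Matrix

structure SComplex (V : Type) [DecidableEq V] where
  faces : Finset (Finset V)
  down_closed : ∀ σ ∈ faces, ∀ τ ⊆ σ, τ ∈ faces

namespace SComplex

variable {V : Type} [Fintype V] [DecidableEq V]

/-- The faces of cardinality `n` (i.e. of dimension `n-1`); so `K Y 2` is the edge set
and `K Y 3` the set of triangles. -/
def K (X : SComplex V) (n : ℕ) : Finset (Finset V) := X.faces.filter fun σ => σ.card = n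

/-- `X` is pure with all facets (maximal faces) of cardinality `D` (dimension `D-1`). -/
def IsPure (X : SComplex V) (D : ℕ) : Prop :=
  X.faces.Nonempty ∧ ∀ σ ∈ X.faces, ∃ τ ∈ X.faces, σ ⊆ τ ∧ τ.card = D

end SComplex

variable {V : Type} [Fintype V] [DecidableEq V]

/-- `t_i`: the number of triangles of `Y` containing exactly `i` edges of `α`. -/
def tcount (Y : SComplex V) (α : Finset (Finset V)) (i : ℕ) : ℕ :=
  ((Y.K 3).filter fun τ => (α.filter fun e => e ⊆ τ).card = i).card

/-- `α_v`: the set of edges of `α` containing the vertex `v`. -/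
def alphaV (α : Finset (Finset V)) (v : V) : Finset (Finset V) :=
  α.filter fun e => v ∈ e

/-- The 1-skeleton of `Y`, as a simple graph on the vertex type. -/
def skeletonGraph (Y : SComplex V) : SimpleGraph V where
  Adj u w := u ≠ w ∧ ({u, w} : Finset V) ∈ Y.faces
  symm := by
    constructor
    intro u w h
    exact ⟨h.1.symm, by rw [Finset.pair_comm]; exact h.2⟩
  loopless := by constructor; intro u h; exact h.1 rfl

/-- The vertices of the link of `v`: the edges of `Y` containing `v`. -/
def linkVerts (Y : SComplex V) (v : V) : Finset (Finset V) :=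
  (Y.K 2).filter fun e => v ∈ e

/-- The link graph `Y_v`: vertices are the edges of `Y` containing `v`, two edges being
adjacent iff they lie in a common triangle of `Y`. -/
def linkGraph (Y : SComplex V) (v : V) : SimpleGraph ↥(linkVerts Y v) where
  Adj e f := e ≠ f ∧ (e.1 ∪ f.1) ∈ Y.K 3
  symm := by
    constructor
    intro e f h
    exact ⟨h.1.symm, by rw [Finset.union_comm]; exact h.2⟩
  loopless := by constructor; intro e h; exact h.1 rfl

/-- The standing hypotheses on the 2-dimensional complex `Y` (with `Q = 2(q²+q+1)`):
`q ≥ 2`; `Y` is finite pure 2-dimensional; (i) every edge lies in exactly `q+1` triangles;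
(ii) the 1-skeleton is a connected `Q`-regular graph whose adjacency eigenvalues other than
`Q` have absolute value at most `6q`; (iii) every link `Y_v` is a connected bipartite
`(q+1)`-regular graph on `Q` vertices whose adjacency eigenvalues other than `±(q+1)` have
absolute value at most `√q`. -/
def Setup (q : ℕ) (Y : SComplex V) : Prop :=
  2 ≤ q ∧ Y.IsPure 3 ∧
  (∀ e ∈ Y.K 2, ((Y.K 3).filter fun τ => e ⊆ τ).card = q + 1) ∧
  (skeletonGraph Y).Connected ∧
  (∀ v : V, (skeletonGraph Y).degree v = 2 * (q ^ 2 + q + 1)) ∧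
  (∀ mu : ℝ, (∃ f : V → ℝ, f ≠ 0 ∧ (skeletonGraph Y).adjMatrix ℝ *ᵥ f = mu • f) →
    mu = 2 * ((q : ℝ) ^ 2 + q + 1) ∨ |mu| ≤ 6 * (q : ℝ)) ∧
  (∀ v : V,
    (linkGraph Y v).Connected ∧
    (∃ C : ↥(linkVerts Y v) → Bool, ∀ a b, (linkGraph Y v).Adj a b → C a ≠ C b) ∧
    (∀ a : ↥(linkVerts Y v), (linkGraph Y v).degree a = q + 1) ∧
    (linkVerts Y v).card = 2 * (q ^ 2 + q + 1) ∧
    (∀ mu : ℝ, (∃ f : ↥(linkVerts Y v) → ℝ, f ≠ 0 ∧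
        (linkGraph Y v).adjMatrix ℝ *ᵥ f = mu • f) →
      mu = (q : ℝ) + 1 ∨ mu = -((q : ℝ) + 1) ∨ |mu| ≤ Real.sqrt q))

/-!
For a triangle `τ` let `k_τ ≤ 3` be the number of its edges in `α`. As `2k - k(k-1)` is `2` for
`k ∈ {1, 2}` and `0` for `k ∈ {0, 3}`, we get `2t₁ + 2t₂ = 2 ∑ k_τ - ∑ k_τ(k_τ-1) = 2(q+1)|α| - P`,
where `P` counts ordered pairs of distinct edges of `α` spanning a triangle. Such a pair meets in
a single vertex `v` and is an edge of the link `Y_v` joining two points of `α_v`; the expander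
mixing lemma in `Y_v` (degree `q+1`, other eigenvalues `≤ √q`) bounds the number of these by
`√q |α_v| + (q+1-√q) |α_v|² / Q`. Summing over `v` with `∑ |α_v| = 2|α|`, it remains to bound
`∑ |α_v|²` by `(Q/2) ∑ |α_v| - ε (Q/2) r`, using `|α_v| ≤ Q/2` everywhere and
`|α_v| < (1-ε) Q/2` at thin vertices.
-/

namespace Matrix

variable {ι : Type*} [Fintype ι] [DecidableEq ι]

theorem IsHermitian.dotProduct_mulVec_le [Nonempty ι] {M : Matrix ι ι ℝ} (hM : M.IsHermitian)
    {d lam : ℝ} (hconst : M *ᵥ (fun _ => 1) = d • fun _ => 1)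
    (heig : ∀ (μ : ℝ) (f : ι → ℝ), f ≠ 0 → M *ᵥ f = μ • f → ∑ i, f i = 0 → μ ≤ lam)
    (x : ι → ℝ) :
    x ⬝ᵥ (M *ᵥ x) ≤ lam * (x ⬝ᵥ x) + (d - lam) / Fintype.card ι * (∑ i, x i) ^ 2 := by
  set c := (d - lam) / Fintype.card ι
  -- `N` kills the constants, and off them `M` has eigenvalues `≤ lam`, so `N` is `≥ 0`.
  set N : Matrix ι ι ℝ := lam • 1 + c • of (fun _ _ => 1) - M
  have hN : ∀ y, N *ᵥ y = lam • y + (c * ∑ i, y i) • (fun _ => 1) - M *ᵥ y := by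
    intro y
    ext i
    simp [N, mulVec, dotProduct, Finset.mul_sum, one_apply, add_mul, sub_mul,
      Finset.sum_add_distrib, Finset.sum_sub_distrib]
  have hNherm : N.IsHermitian := by
    ext i j
    simp [N, one_apply, eq_comm, ← hM.apply i j]
  have hNconst : N *ᵥ (fun _ => 1) = 0 := by
    ext i
    simp [hN, hconst, c]
  have hsum : ∀ y, ∑ i, (N *ᵥ y) i = 0 := by
    intro y
    have := dotProduct_mulVec (fun _ => (1:ℝ)) N y
    rw [← mulVec_transpose, (isHermitian_iff_isSymm.1 hNherm).eq, hNconst,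
      zero_dotProduct] at this
    simpa [dotProduct] using this
  have hpsd : N.PosSemidef := by
    refine hNherm.posSemidef_iff_eigenvalues_nonneg.2 fun i => ?_
    by_contra! hneg
    rw [Pi.zero_apply] at hneg
    set g : ι → ℝ := ⇑(hNherm.eigenvectorBasis i)
    have hg : N *ᵥ g = hNherm.eigenvalues i • g := hNherm.mulVec_eigenvectorBasis i
    have hg0 : g ≠ 0 := fun h => hNherm.eigenvectorBasis.orthonormal.ne_zero i (by
      ext j; exact congrFun h j)
    have hgsum : ∑ i, g i = 0 := by
      have := hsum g
      simp only [hg, Pi.smul_apply, smul_eq_mul, ← Finset.mul_sum] at this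
      exact (mul_eq_zero.1 this).resolve_left hneg.ne
    have hMg : M *ᵥ g = (lam - hNherm.eigenvalues i) • g := by
      have := hN g
      rw [hg, hgsum, mul_zero, zero_smul, add_zero] at this
      rw [sub_smul, this]
      abel
    linarith [heig _ g hg0 hMg hgsum]
  have := hpsd.dotProduct_mulVec_nonneg x
  simp only [star_trivial, hN, dotProduct_sub, dotProduct_add, dotProduct_smul, smul_eq_mul] at this
  have hx1 : x ⬝ᵥ (fun _ => (1:ℝ)) = ∑ i, x i := by simp [dotProduct]
  rw [hx1] at this
  nlinarith

end Matrix

namespace SimpleGraph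

variable {ι : Type*} [Fintype ι] [DecidableEq ι] {G : SimpleGraph ι} [DecidableRel G.Adj]
  {d : ℕ}

theorem Connected.eq_of_adjMatrix_mulVec_eq_degree_smul (hG : G.Connected)
    (hd : G.IsRegularOfDegree d) {f : ι → ℝ} (hf : G.adjMatrix ℝ *ᵥ f = (d : ℝ) • f) (i j : ι) :
    f i = f j := by
  refine (lapMatrix_mulVec_eq_zero_iff_forall_reachable G).1 ?_ i j (hG i j)
  ext k
  simp [lapMatrix, sub_mulVec, hf, degMatrix_mulVec_apply, hd k]

theorem dotProduct_adjMatrix_mulVec_le (hG : G.Connected) (hd : G.IsRegularOfDegree d) {lam : ℝ}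
    (heig : ∀ μ : ℝ, (∃ f : ι → ℝ, f ≠ 0 ∧ G.adjMatrix ℝ *ᵥ f = μ • f) → μ = d ∨ μ ≤ lam)
    (x : ι → ℝ) :
    x ⬝ᵥ (G.adjMatrix ℝ *ᵥ x) ≤ lam * (x ⬝ᵥ x) + (d - lam) / Fintype.card ι * (∑ i, x i) ^ 2 := by
  have := hG.nonempty
  refine (isHermitian_adjMatrix ℝ G).dotProduct_mulVec_le ?_ (fun μ f hf0 hf hfsum => ?_) x
  · ext i
    simp [hd i]
  refine (heig μ ⟨f, hf0, hf⟩).resolve_left fun hμ => hf0 ?_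
  subst hμ
  obtain ⟨i⟩ := hG.nonempty
  have hconst := hG.eq_of_adjMatrix_mulVec_eq_degree_smul hd hf
  simp [hconst _ i] at hfsum
  exact funext fun j => (hconst j i).trans hfsum

theorem card_filter_adj_le (hG : G.Connected) (hd : G.IsRegularOfDegree d) {lam : ℝ}
    (heig : ∀ μ : ℝ, (∃ f : ι → ℝ, f ≠ 0 ∧ G.adjMatrix ℝ *ᵥ f = μ • f) → μ = d ∨ μ ≤ lam)
    (s : Finset ι) :
    (((s ×ˢ s).filter fun p => G.Adj p.1 p.2).card : ℝ) ≤
      lam * s.card + (d - lam) / Fintype.card ι * s.card ^ 2 := by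
  have := dotProduct_adjMatrix_mulVec_le hG hd heig fun i => if i ∈ s then 1 else 0
  convert this using 3
  · rw [Finset.card_filter, Finset.sum_product]
    simp only [dotProduct, mulVec, adjMatrix_apply]
    push_cast
    simp [ite_mul, mul_ite, Finset.sum_ite_mem]
  · simp [dotProduct]
  · simp

end SimpleGraph

theorem Finset.two_mul_sum_eq_of_forall_le_three {ι : Type*}
    (T : Finset ι) (k : ι → ℕ) (hk : ∀ i ∈ T, k i ≤ 3) :
    2 * (T.filter (k · = 1)).card + 2 * (T.filter (k · = 2)).card + ∑ i ∈ T, k i * (k i - 1) =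
      2 * ∑ i ∈ T, k i := by
  simp only [Finset.card_filter, Finset.mul_sum, ← Finset.sum_add_distrib]
  refine Finset.sum_congr rfl fun i hi => ?_
  have := hk i hi
  interval_cases k i <;> rfl

theorem Finset.sum_sq_le_sub_mul_sum_filter {ι : Type*} (s : Finset ι) (a : ι → ℝ) {M ε : ℝ}
    (p : ι → Prop) [DecidablePred p] (ha : ∀ i ∈ s, 0 ≤ a i) (hM : ∀ i ∈ s, a i ≤ M)
    (hp : ∀ i ∈ s, p i → a i ≤ (1 - ε) * M) :
    ∑ i ∈ s, a i ^ 2 ≤ M * ∑ i ∈ s, a i - ε * M * ∑ i ∈ s.filter p, a i := by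
  have hthin : ∑ i ∈ s.filter p, a i ^ 2 ≤ (1 - ε) * M * ∑ i ∈ s.filter p, a i := by
    rw [Finset.mul_sum]
    refine Finset.sum_le_sum fun i hi => ?_
    obtain ⟨hs, hpi⟩ := Finset.mem_filter.1 hi
    nlinarith [ha i hs, hp i hs hpi]
  have hthick : ∑ i ∈ s.filter (¬p ·), a i ^ 2 ≤ M * ∑ i ∈ s.filter (¬p ·), a i := by
    rw [Finset.mul_sum]
    refine Finset.sum_le_sum fun i hi => ?_
    obtain ⟨hs, -⟩ := Finset.mem_filter.1 hi
    nlinarith [ha i hs, hM i hs]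
  rw [← Finset.sum_filter_add_sum_filter_not s p, ← Finset.sum_filter_add_sum_filter_not s p a]
  linarith

section

-- Redeclared so that the ambient `[Fintype V]` is not added to every lemma below.
variable {V : Type} [DecidableEq V]

theorem SComplex.card_of_mem_K {X : SComplex V} {n : ℕ} {σ : Finset V} (h : σ ∈ X.K n) :
    σ.card = n :=
  (Finset.mem_filter.1 h).2

theorem Finset.card_inter_eq_one_of_card_union_eq_three {e f : Finset V} (he : e.card = 2)
    (hf : f.card = 2) (hef : (e ∪ f).card = 3) : (e ∩ f).card = 1 := by
  have := Finset.card_union_add_card_inter e f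
  omega

theorem Finset.union_eq_of_card_eq_two_of_card_eq_three {e f τ : Finset V} (he : e.card = 2)
    (hf : f.card = 2) (hτ : τ.card = 3) (hne : e ≠ f) (heτ : e ⊆ τ) (hfτ : f ⊆ τ) :
    e ∪ f = τ := by
  have hinter : (e ∩ f).card < 2 := by
    by_contra! h
    exact hne ((Finset.eq_of_subset_of_card_le Finset.inter_subset_left (by omega)).symm.trans
      (Finset.eq_of_subset_of_card_le Finset.inter_subset_right (by omega)))
  have := Finset.card_union_add_card_inter e f
  exact Finset.eq_of_subset_of_card_le (Finset.union_subset heτ hfτ) (by omega)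

def trianglePairs (Y : SComplex V) (α : Finset (Finset V)) : Finset (Finset V × Finset V) :=
  (α ×ˢ α).filter fun p => p.1 ≠ p.2 ∧ p.1 ∪ p.2 ∈ Y.K 3

variable {Y : SComplex V} {α : Finset (Finset V)}

theorem card_linkGraph_adj_eq (hα : α ⊆ Y.K 2) (v : V) :
    (((alphaV α v).subtype (· ∈ linkVerts Y v) ×ˢ (alphaV α v).subtype (· ∈ linkVerts Y v)).filter
        fun p => (linkGraph Y v).Adj p.1 p.2).card =
      ((trianglePairs Y α).filter fun p => v ∈ p.1 ∧ v ∈ p.2).card := by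
  refine Finset.card_bij (fun p _ => (p.1.1, p.2.1)) ?_ ?_ ?_
  · intro p hp
    simp only [Finset.mem_filter, Finset.mem_product, Finset.mem_subtype, alphaV, linkGraph,
      ne_eq, Subtype.ext_iff] at hp
    simp only [trianglePairs, Finset.mem_filter, Finset.mem_product]
    tauto
  · intro p _ p' _ h
    simp only [Prod.mk.injEq] at h
    exact Prod.ext (Subtype.ext h.1) (Subtype.ext h.2)
  · intro p hp
    simp only [trianglePairs, Finset.mem_filter, Finset.mem_product] at hp
    obtain ⟨⟨⟨he, hf⟩, hne, hτ⟩, hve, hvf⟩ := hp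
    refine ⟨(⟨p.1, Finset.mem_filter.2 ⟨hα he, hve⟩⟩, ⟨p.2, Finset.mem_filter.2 ⟨hα hf, hvf⟩⟩),
      ?_, rfl⟩
    exact Finset.mem_filter.2 ⟨Finset.mem_product.2
      ⟨Finset.mem_subtype.2 (Finset.mem_filter.2 ⟨he, hve⟩),
        Finset.mem_subtype.2 (Finset.mem_filter.2 ⟨hf, hvf⟩)⟩,
      fun h => hne (congrArg Subtype.val h), hτ⟩

theorem card_subtype_alphaV (hα : α ⊆ Y.K 2) (v : V) :
    ((alphaV α v).subtype (· ∈ linkVerts Y v)).card = (alphaV α v).card := by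
  rw [Finset.card_subtype, Finset.filter_true_of_mem]
  intro e he
  exact Finset.mem_filter.2 ⟨hα (Finset.mem_filter.1 he).1, (Finset.mem_filter.1 he).2⟩

theorem sum_card_alphaV [Fintype V] (α : Finset (Finset V)) :
    ∑ v, (alphaV α v).card = ∑ e ∈ α, e.card := by
  simpa [Finset.bipartiteAbove, Finset.bipartiteBelow, alphaV, Finset.filter_mem_eq_inter] using
    Finset.sum_card_bipartiteAbove_eq_sum_card_bipartiteBelow (fun v e => v ∈ e)
      (s := Finset.univ) (t := α)

theorem sum_card_filter_subset_eq {q : ℕ} (hα : α ⊆ Y.K 2)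
    (hedge : ∀ e ∈ Y.K 2, ((Y.K 3).filter fun τ => e ⊆ τ).card = q + 1) :
    ∑ τ ∈ Y.K 3, (α.filter fun e => e ⊆ τ).card = (q + 1) * α.card := by
  calc ∑ τ ∈ Y.K 3, (α.filter fun e => e ⊆ τ).card
      = ∑ e ∈ α, ((Y.K 3).filter fun τ => e ⊆ τ).card :=
        Finset.sum_card_bipartiteAbove_eq_sum_card_bipartiteBelow _
    _ = (q + 1) * α.card := by
        rw [Finset.sum_congr rfl fun e he => hedge e (hα he), Finset.sum_const, smul_eq_mul,
          mul_comm]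

theorem sum_card_filter_mem_trianglePairs [Fintype V] (hα : α ⊆ Y.K 2) :
    ∑ v, ((trianglePairs Y α).filter fun p => v ∈ p.1 ∧ v ∈ p.2).card =
      (trianglePairs Y α).card := by
  rw [Finset.card_eq_sum_ones]
  refine (Finset.sum_card_bipartiteAbove_eq_sum_card_bipartiteBelow
    (fun (v : V) (p : Finset V × Finset V) => v ∈ p.1 ∧ v ∈ p.2)).trans
    (Finset.sum_congr rfl fun p hp => ?_)
  simp only [trianglePairs, Finset.mem_filter, Finset.mem_product] at hp
  obtain ⟨⟨he, hf⟩, -, hτ⟩ := hp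
  rw [← Finset.card_inter_eq_one_of_card_union_eq_three (SComplex.card_of_mem_K (hα he))
    (SComplex.card_of_mem_K (hα hf)) (SComplex.card_of_mem_K hτ)]
  congr 1
  ext v
  simp [Finset.bipartiteBelow]

theorem sum_card_mul_pred_eq_card_trianglePairs (hα : α ⊆ Y.K 2) :
    ∑ τ ∈ Y.K 3, (α.filter fun e => e ⊆ τ).card * ((α.filter fun e => e ⊆ τ).card - 1) =
      (trianglePairs Y α).card := by
  have hoff : ∀ τ ∈ Y.K 3, (α.filter fun e => e ⊆ τ).offDiag =
      (trianglePairs Y α).filter fun p => p.1 ⊆ τ ∧ p.2 ⊆ τ := by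
    intro τ hτ
    ext ⟨e, f⟩
    simp only [Finset.mem_offDiag, Finset.mem_filter, trianglePairs, Finset.mem_product]
    constructor
    · rintro ⟨⟨he, heτ⟩, ⟨hf, hfτ⟩, hne⟩
      refine ⟨⟨⟨he, hf⟩, hne, ?_⟩, heτ, hfτ⟩
      rwa [Finset.union_eq_of_card_eq_two_of_card_eq_three (SComplex.card_of_mem_K (hα he))
        (SComplex.card_of_mem_K (hα hf)) (SComplex.card_of_mem_K hτ) hne heτ hfτ]
    · rintro ⟨⟨⟨he, hf⟩, hne, -⟩, heτ, hfτ⟩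
      exact ⟨⟨he, heτ⟩, ⟨hf, hfτ⟩, hne⟩
  have hunique : ∀ p ∈ trianglePairs Y α,
      ((Y.K 3).filter fun τ => p.1 ⊆ τ ∧ p.2 ⊆ τ) = {p.1 ∪ p.2} := by
    rintro ⟨e, f⟩ hp
    simp only [trianglePairs, Finset.mem_filter, Finset.mem_product] at hp
    obtain ⟨⟨he, hf⟩, hne, hτ⟩ := hp
    refine Finset.eq_singleton_iff_unique_mem.2 ⟨Finset.mem_filter.2 ⟨hτ,
      Finset.subset_union_left, Finset.subset_union_right⟩, fun τ hτ' => ?_⟩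
    obtain ⟨hτ', heτ, hfτ⟩ := Finset.mem_filter.1 hτ'
    exact (Finset.union_eq_of_card_eq_two_of_card_eq_three (SComplex.card_of_mem_K (hα he))
      (SComplex.card_of_mem_K (hα hf)) (SComplex.card_of_mem_K hτ') hne heτ hfτ).symm
  calc ∑ τ ∈ Y.K 3, (α.filter fun e => e ⊆ τ).card * ((α.filter fun e => e ⊆ τ).card - 1)
      = ∑ τ ∈ Y.K 3, ((trianglePairs Y α).filter fun p => p.1 ⊆ τ ∧ p.2 ⊆ τ).card :=
        Finset.sum_congr rfl fun τ hτ => by rw [← hoff τ hτ, Finset.offDiag_card, Nat.mul_sub_one]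
    _ = ∑ p ∈ trianglePairs Y α, ((Y.K 3).filter fun τ => p.1 ⊆ τ ∧ p.2 ⊆ τ).card :=
        Finset.sum_card_bipartiteAbove_eq_sum_card_bipartiteBelow
          (fun (τ : Finset V) (p : Finset V × Finset V) => p.1 ⊆ τ ∧ p.2 ⊆ τ)
    _ = (trianglePairs Y α).card := by
        rw [Finset.card_eq_sum_ones, Finset.sum_congr rfl fun p hp => by
          rw [hunique p hp, Finset.card_singleton]]

theorem two_mul_tcount_one_add_two_mul_tcount_two (hα : α ⊆ Y.K 2) :
    2 * tcount Y α 1 + 2 * tcount Y α 2 +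
        ∑ τ ∈ Y.K 3, (α.filter fun e => e ⊆ τ).card * ((α.filter fun e => e ⊆ τ).card - 1) =
      2 * ∑ τ ∈ Y.K 3, (α.filter fun e => e ⊆ τ).card := by
  refine Finset.two_mul_sum_eq_of_forall_le_three _ _ fun τ hτ => ?_
  calc (α.filter fun e => e ⊆ τ).card ≤ (τ.powersetCard 2).card :=
        Finset.card_le_card fun e he => Finset.mem_powersetCard.2
          ⟨(Finset.mem_filter.1 he).2, SComplex.card_of_mem_K (hα (Finset.mem_filter.1 he).1)⟩
    _ = 3 := by rw [Finset.card_powersetCard, SComplex.card_of_mem_K hτ]; rfl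

theorem two_mul_tcount_one_add_two_mul_tcount_two_add_card_trianglePairs {q : ℕ}
    (hα : α ⊆ Y.K 2) (hedge : ∀ e ∈ Y.K 2, ((Y.K 3).filter fun τ => e ⊆ τ).card = q + 1) :
    2 * tcount Y α 1 + 2 * tcount Y α 2 + (trianglePairs Y α).card = 2 * (q + 1) * α.card := by
  rw [← sum_card_mul_pred_eq_card_trianglePairs hα, two_mul_tcount_one_add_two_mul_tcount_two hα,
    sum_card_filter_subset_eq hα hedge, mul_assoc]

theorem card_filter_mem_trianglePairs_le [Fintype V] {q : ℕ} (hY : Setup q Y) (hα : α ⊆ Y.K 2)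
    (v : V) :
    (((trianglePairs Y α).filter fun p => v ∈ p.1 ∧ v ∈ p.2).card : ℝ) ≤
      Real.sqrt q * (alphaV α v).card +
        ((q : ℝ) + 1 - Real.sqrt q) / (2 * ((q : ℝ) ^ 2 + q + 1)) * (alphaV α v).card ^ 2 := by
  obtain ⟨-, -, -, -, -, -, hlink⟩ := hY
  obtain ⟨hconn, -, hdeg, hcard, heig⟩ := hlink v
  have heig' : ∀ μ : ℝ, (∃ f, f ≠ 0 ∧ (linkGraph Y v).adjMatrix ℝ *ᵥ f = μ • f) →
      μ = ((q + 1 : ℕ) : ℝ) ∨ μ ≤ Real.sqrt q := by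
    intro μ hμ
    push_cast
    rcases heig μ hμ with h | h | h
    · exact Or.inl h
    · exact Or.inr (by linarith [Real.sqrt_nonneg (q : ℝ)])
    · exact Or.inr (abs_le.1 h).2
  have := SimpleGraph.card_filter_adj_le hconn hdeg heig'
    ((alphaV α v).subtype (· ∈ linkVerts Y v))
  rw [card_linkGraph_adj_eq hα, card_subtype_alphaV hα, Fintype.card_coe, hcard] at this
  exact_mod_cast this

end

theorem two_t1_add_two_t2_lower_bound_general
    {V : Type} [Fintype V] [DecidableEq V] (q : ℕ) (Y : SComplex V) (hY : Setup q Y)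
    (ε : ℝ)
    (α : Finset (Finset V)) (hα : α ⊆ Y.K 2)
    (hlocmin : ∀ v : V, ((alphaV α v).card : ℝ) ≤ 2 * ((q : ℝ) ^ 2 + q + 1) / 2) :
    2 * (tcount Y α 1 : ℝ) + 2 * (tcount Y α 2 : ℝ) ≥
      ((q : ℝ) + 1 - Real.sqrt q) * (α.card : ℝ) +
        (ε / 2) * ((q : ℝ) + 1 - Real.sqrt q) *
          (∑ v ∈ Finset.univ.filter (fun v : V => (alphaV α v).Nonempty ∧
              ((alphaV α v).card : ℝ) < (1 - ε) * (2 * ((q : ℝ) ^ 2 + q + 1)) / 2),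
            ((alphaV α v).card : ℝ)) := by
  set Q : ℝ := 2 * ((q : ℝ) ^ 2 + q + 1)
  set r := ∑ v ∈ Finset.univ.filter (fun v : V => (alphaV α v).Nonempty ∧
    ((alphaV α v).card : ℝ) < (1 - ε) * Q / 2), ((alphaV α v).card : ℝ)
  have hcount : 2 * (tcount Y α 1 : ℝ) + 2 * tcount Y α 2 + (trianglePairs Y α).card =
      2 * (q + 1) * α.card := by
    exact_mod_cast two_mul_tcount_one_add_two_mul_tcount_two_add_card_trianglePairs hα hY.2.2.1
  have hhandshake : ∑ v, ((alphaV α v).card : ℝ) = 2 * α.card := by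
    rw [← Nat.cast_sum, sum_card_alphaV, Finset.sum_congr rfl fun e he =>
      SComplex.card_of_mem_K (hα he)]
    simp [mul_comm]
  have hpairs : ((trianglePairs Y α).card : ℝ) ≤
      Real.sqrt q * (2 * α.card) + ((q : ℝ) + 1 - Real.sqrt q) / Q *
        ∑ v, ((alphaV α v).card : ℝ) ^ 2 := by
    rw [← sum_card_filter_mem_trianglePairs hα, Nat.cast_sum, ← hhandshake, Finset.mul_sum,
      Finset.mul_sum, ← Finset.sum_add_distrib]
    exact Finset.sum_le_sum fun v _ => card_filter_mem_trianglePairs_le hY hα v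
  have hsq : ∑ v, ((alphaV α v).card : ℝ) ^ 2 ≤ Q / 2 * (2 * α.card) - ε * (Q / 2) * r := by
    rw [← hhandshake]
    exact Finset.sum_sq_le_sub_mul_sum_filter _ _ _ (fun v _ => Nat.cast_nonneg _)
      (fun v _ => hlocmin v) fun v _ hv => by rw [← mul_div_assoc]; exact hv.2.le
  have hsqrt : Real.sqrt q ≤ q + 1 :=
    Real.sqrt_le_iff.2 ⟨by positivity, by nlinarith [(Nat.cast_nonneg q : (0 : ℝ) ≤ q)]⟩
  have hQ : 0 < Q := by positivity
  have hQcancel : ((q : ℝ) + 1 - Real.sqrt q) / Q * (Q / 2 * (2 * α.card) - ε * (Q / 2) * r) =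
      ((q : ℝ) + 1 - Real.sqrt q) * α.card - ε / 2 * ((q : ℝ) + 1 - Real.sqrt q) * r := by
    field_simp
  linarith [mul_le_mul_of_nonneg_left hsq (div_nonneg (sub_nonneg.2 hsqrt) hQ.le)]

/-- Under the standing hypotheses, if `|α_v| ≤ Q/2` for every vertex `v`
(local minimality), then `2t₁ + 2t₂ ≥ (q+1−√q)|α| + (ε/2)(q+1−√q)·r`, where `r` is the total
contribution of the thin vertices. -/
theorem two_t1_add_two_t2_lower_bound
    {V : Type} [Fintype V] [DecidableEq V] (q : ℕ) (Y : SComplex V) (hY : Setup q Y)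
    (ε : ℝ) (hε0 : 0 < ε) (hε1 : ε < 1)
    (α : Finset (Finset V)) (hα : α ⊆ Y.K 2)
    (hlocmin : ∀ v : V, ((alphaV α v).card : ℝ) ≤ 2 * ((q : ℝ) ^ 2 + q + 1) / 2) :
    2 * (tcount Y α 1 : ℝ) + 2 * (tcount Y α 2 : ℝ) ≥
      ((q : ℝ) + 1 - Real.sqrt q) * (α.card : ℝ) +
        (ε / 2) * ((q : ℝ) + 1 - Real.sqrt q) *
          (∑ v ∈ Finset.univ.filter (fun v : V => (alphaV α v).Nonempty ∧
              ((alphaV α v).card : ℝ) < (1 - ε) * (2 * ((q : ℝ) ^ 2 + q + 1)) / 2),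
            ((alphaV α v).card : ℝ)) :=
  two_t1_add_two_t2_lower_bound_general q Y hY ε α hα hlocmin
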